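/- arXiv:1409.4484 — 5 statements merged into one kernel-verified Lean document; each statement's English description precedes it below -/
import Mathlib

section
/- For any W ⊆ V, λ(C_W) ≤ λ(C_0), where λ(S) = Σ_{A∈S} x^{|A|} and C_W = {A ⊆ E : ∂A = W}. In particular the Ising correlation ⟨∏_{v∈W} σ_v⟩ = λ(C_W)/λ(C_0) lies in [0, 1]. -/
open Finset

/-- The set of odd-degree vertices of the spanning subgraph `(V, A)`. -/
def oddVerts {V : Type*} [Fintype V] [DecidableEq V] (A : Finset (Sym2 V)) : Finset V :=
  Finset.univ.filter fun v => Odd (A.filter fun e => v ∈ e).card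

/-- `λ(C_W) = Σ_{A ⊆ E, ∂A = W} x^{|A|}`. -/
noncomputable def lam {V : Type*} [Fintype V] [DecidableEq V]
    (G : SimpleGraph V) [DecidableRel G.Adj] (x : ℝ) (W : Finset V) : ℝ :=
  ∑ A ∈ G.edgeFinset.powerset.filter (fun A => oddVerts A = W), x ^ A.card

namespace IsingAux

variable {V : Type*} [Fintype V] [DecidableEq V]

/-- The spin value of a configuration at a vertex. -/
def sgn (σ : V → Bool) (v : V) : ℝ := if σ v then 1 else -1

/-- The product of spins over the endpoints of an edge. -/
def wt (σ : V → Bool) (e : Sym2 V) : ℝ := ∏ v ∈ Finset.univ.filter (· ∈ e), sgn σ v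

lemma sgn_cases (σ : V → Bool) (v : V) : sgn σ v = 1 ∨ sgn σ v = -1 := by
  unfold sgn; split <;> simp

lemma wt_cases (σ : V → Bool) (e : Sym2 V) : wt σ e = 1 ∨ wt σ e = -1 := by
  unfold wt
  refine Finset.prod_induction _ (fun a => a = 1 ∨ a = -1) ?_ (Or.inl rfl)
    (fun v _ => sgn_cases σ v)
  rintro a b (rfl | rfl) (rfl | rfl) <;> norm_num

lemma prod_wt (σ : V → Bool) (A : Finset (Sym2 V)) :
    ∏ e ∈ A, wt σ e = ∏ v, sgn σ v ^ (A.filter fun e => v ∈ e).card := by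
  unfold wt
  rw [Finset.prod_comm' (s' := fun v => A.filter fun e => v ∈ e) (t' := Finset.univ)]
  · exact Finset.prod_congr rfl fun v _ => Finset.prod_const _
  · intro e v
    simp [Finset.mem_filter, and_comm]

lemma sum_sgn_pow (d : V → ℕ) :
    ∑ σ : V → Bool, ∏ v, sgn σ v ^ d v
      = if ∀ v, Even (d v) then (2 : ℝ) ^ Fintype.card V else 0 := by
  have key : ∀ v : V, (∑ b : Bool, (if b then (1 : ℝ) else -1) ^ d v)
      = if Even (d v) then 2 else 0 := by
    intro v
    rcases Nat.even_or_odd (d v) with h | h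
    · simp [Fintype.sum_bool, h.neg_one_pow, h]
    · simp [Fintype.sum_bool, h.neg_one_pow, Nat.not_even_iff_odd.mpr h]
  calc ∑ σ : V → Bool, ∏ v, sgn σ v ^ d v
      = ∏ v, ∑ b : Bool, (if b then (1 : ℝ) else -1) ^ d v := by
        simp only [sgn]
        exact (Fintype.prod_sum fun v (b : Bool) => (if b = true then (1 : ℝ) else -1) ^ d v).symm
    _ = ∏ v, if Even (d v) then (2 : ℝ) else 0 := Finset.prod_congr rfl fun v _ => key v
    _ = if ∀ v, Even (d v) then (2 : ℝ) ^ Fintype.card V else 0 := by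
        by_cases h : ∀ v, Even (d v)
        · simp [h, Finset.prod_const, Finset.card_univ]
        · push_neg at h
          obtain ⟨v, hv⟩ := h
          rw [if_neg (by push_neg; exact ⟨v, hv⟩)]
          exact Finset.prod_eq_zero (Finset.mem_univ v) (by simp [hv])

lemma even_cond_iff (A : Finset (Sym2 V)) (W : Finset V) :
    (∀ v, Even ((A.filter fun e => v ∈ e).card + if v ∈ W then 1 else 0))
      ↔ oddVerts A = W := by
  constructor
  · intro h
    ext v
    have := h v
    by_cases hv : v ∈ W <;>
      simp only [hv, if_pos, if_neg, not_false_iff] at this <;>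
      simp [oddVerts, hv, Nat.odd_iff, Nat.even_iff] at this ⊢ <;> omega
  · intro h v
    have hv : v ∈ oddVerts A ↔ v ∈ W := by rw [h]
    simp only [oddVerts, Finset.mem_filter, Finset.mem_univ, true_and] at hv
    by_cases hw : v ∈ W
    · have := hv.mpr hw
      simp only [hw, if_pos]
      rw [Nat.odd_iff] at this
      rw [Nat.even_iff]; omega
    · have : ¬ Odd (A.filter fun e => v ∈ e).card := fun hodd => hw (hv.mp hodd)
      simp only [hw, if_neg, not_false_iff, add_zero]
      exact Nat.not_odd_iff_even.mp this

/-- The high-temperature expansion identity. -/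
lemma expansion (G : SimpleGraph V) [DecidableRel G.Adj] (x : ℝ) (W : Finset V) :
    ∑ σ : V → Bool, (∏ v ∈ W, sgn σ v) * ∏ e ∈ G.edgeFinset, (1 + x * wt σ e)
      = 2 ^ Fintype.card V * lam G x W := by
  have expand : ∀ σ : V → Bool,
      (∏ e ∈ G.edgeFinset, (1 + x * wt σ e))
        = ∑ A ∈ G.edgeFinset.powerset, x ^ A.card * ∏ e ∈ A, wt σ e := by
    intro σ
    rw [show (fun e => 1 + x * wt σ e) = fun e => x * wt σ e + 1 by funext e; ring,
      Finset.prod_add]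
    refine Finset.sum_congr rfl fun A _ => ?_
    rw [Finset.prod_const_one, mul_one, Finset.prod_mul_distrib, Finset.prod_const]
  calc ∑ σ : V → Bool, (∏ v ∈ W, sgn σ v) * ∏ e ∈ G.edgeFinset, (1 + x * wt σ e)
      = ∑ σ : V → Bool, ∑ A ∈ G.edgeFinset.powerset,
          x ^ A.card * ((∏ v ∈ W, sgn σ v) * ∏ e ∈ A, wt σ e) := by
        refine Finset.sum_congr rfl fun σ _ => ?_
        rw [expand σ, Finset.mul_sum]
        exact Finset.sum_congr rfl fun A _ => by ring
    _ = ∑ A ∈ G.edgeFinset.powerset, x ^ A.card *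
          ∑ σ : V → Bool, (∏ v ∈ W, sgn σ v) * ∏ e ∈ A, wt σ e := by
        rw [Finset.sum_comm]
        exact Finset.sum_congr rfl fun A _ => by rw [Finset.mul_sum]
    _ = ∑ A ∈ G.edgeFinset.powerset, x ^ A.card *
          (if oddVerts A = W then (2 : ℝ) ^ Fintype.card V else 0) := by
        refine Finset.sum_congr rfl fun A _ => ?_
        congr 1
        have : ∀ σ : V → Bool, (∏ v ∈ W, sgn σ v) * ∏ e ∈ A, wt σ e
            = ∏ v, sgn σ v ^ ((A.filter fun e => v ∈ e).card + if v ∈ W then 1 else 0) := by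
          intro σ
          rw [prod_wt]
          have hW : ∏ v ∈ W, sgn σ v = ∏ v, sgn σ v ^ (if v ∈ W then 1 else 0) := by
            have h1 : ∀ v, sgn σ v ^ (if v ∈ W then 1 else 0)
                = if v ∈ W then sgn σ v else 1 := by intro v; split <;> simp
            rw [Finset.prod_congr rfl fun v _ => h1 v, Finset.prod_ite_mem,
              Finset.univ_inter]
          rw [hW, ← Finset.prod_mul_distrib]
          exact Finset.prod_congr rfl fun v _ => by rw [← pow_add]; ring_nf
        rw [Finset.sum_congr rfl fun σ _ => this σ, sum_sgn_pow,
          if_congr (even_cond_iff A W) rfl rfl]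
    _ = 2 ^ Fintype.card V * lam G x W := by
        rw [lam, Finset.sum_filter, Finset.mul_sum]
        refine Finset.sum_congr rfl fun A _ => ?_
        by_cases h : oddVerts A = W <;> simp [h] <;> ring

lemma prod_pos {x : ℝ} (hx : x ∈ Set.Ioo (0 : ℝ) 1) (G : SimpleGraph V)
    [DecidableRel G.Adj] (σ : V → Bool) :
    0 < ∏ e ∈ G.edgeFinset, (1 + x * wt σ e) := by
  refine Finset.prod_pos fun e _ => ?_
  rcases wt_cases σ e with h | h <;> rw [h] <;> nlinarith [hx.1, hx.2]

lemma prod_sgn_le_one (σ : V → Bool) (W : Finset V) : ∏ v ∈ W, sgn σ v ≤ 1 := by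
  have : (∏ v ∈ W, sgn σ v) = 1 ∨ (∏ v ∈ W, sgn σ v) = -1 := by
    refine Finset.prod_induction _ (fun a => a = 1 ∨ a = -1) ?_ (Or.inl rfl)
      (fun v _ => sgn_cases σ v)
    rintro a b (rfl | rfl) (rfl | rfl) <;> norm_num
  rcases this with h | h <;> rw [h] <;> norm_num

end IsingAux

/-- For any `W ⊆ V`, `λ(C_W) ≤ λ(C_0)`; in particular the Ising correlation
`⟨∏_{v ∈ W} σ_v⟩ = λ(C_W)/λ(C_0)` lies in `[0, 1]`. -/
theorem lam_le_lam_empty {V : Type*} [Fintype V] [DecidableEq V]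
    (G : SimpleGraph V) [DecidableRel G.Adj] (hG : G.Connected)
    {x : ℝ} (hx : x ∈ Set.Ioo (0 : ℝ) 1) (W : Finset V) :
    lam G x W ≤ lam G x ∅ ∧ lam G x W / lam G x ∅ ∈ Set.Icc (0 : ℝ) 1 := by
  classical
  have h2 : (0 : ℝ) < 2 ^ Fintype.card V := by positivity
  -- λ W ≤ λ ∅
  have hW := IsingAux.expansion G x W
  have h0 := IsingAux.expansion G x ∅
  simp only [Finset.prod_empty, one_mul] at h0
  have hle : lam G x W ≤ lam G x ∅ := by
    have hsum : ∑ σ : V → Bool, (∏ v ∈ W, IsingAux.sgn σ v) *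
        ∏ e ∈ G.edgeFinset, (1 + x * IsingAux.wt σ e)
        ≤ ∑ σ : V → Bool, ∏ e ∈ G.edgeFinset, (1 + x * IsingAux.wt σ e) := by
      refine Finset.sum_le_sum fun σ _ => ?_
      have hp := IsingAux.prod_pos hx G σ
      nlinarith [IsingAux.prod_sgn_le_one σ W]
    rw [hW, h0] at hsum
    exact le_of_mul_le_mul_left hsum h2
  -- λ ∅ > 0
  have h0pos : 0 < lam G x ∅ := by
    have : (0 : ℝ) < ∑ σ : V → Bool, ∏ e ∈ G.edgeFinset, (1 + x * IsingAux.wt σ e) :=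
      Finset.sum_pos (fun σ _ => IsingAux.prod_pos hx G σ) Finset.univ_nonempty
    rw [h0] at this
    nlinarith [this, h2]
  -- λ W ≥ 0
  have hWpos : 0 ≤ lam G x W := by
    exact Finset.sum_nonneg fun A _ => pow_nonneg hx.1.le _
  refine ⟨hle, div_nonneg hWpos h0pos.le, (div_le_one h0pos).mpr hle⟩
end

section
/- With λ(A) = x^{|A|} and x ∈ (0,1), for distinct vertices u, v at graph distance d(u,v): λ(C_0) ≤ x^{-d(u,v)} λ(C_{uv}). -/
open Finset
open scoped symmDiff

lemma card_symmDiff_parity {α : Type*} [DecidableEq α] (s t : Finset α) :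
    (s ∆ t).card % 2 = (s.card + t.card) % 2 := by
  have h1 : (s ∆ t) ∪ (s ∩ t) = s ∪ t := by
    ext a; simp [Finset.mem_symmDiff]; tauto
  have h2 : Disjoint (s ∆ t) (s ∩ t) := by
    rw [Finset.disjoint_left]; intro a ha hb
    simp [Finset.mem_symmDiff] at ha
    simp at hb
    tauto
  have h3 := Finset.card_union_of_disjoint h2
  rw [h1] at h3
  have h4 := Finset.card_union_add_card_inter s t
  omega

lemma oddVerts_symmDiff {V : Type*} [Fintype V] [DecidableEq V] (A B : Finset (Sym2 V)) :
    oddVerts (A ∆ B) = oddVerts A ∆ oddVerts B := by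
  ext w
  have hf : (A ∆ B).filter (fun e => w ∈ e) = (A.filter fun e => w ∈ e) ∆ (B.filter fun e => w ∈ e) := by
    ext e; simp [Finset.mem_symmDiff]; tauto
  have := card_symmDiff_parity (A.filter fun e => w ∈ e) (B.filter fun e => w ∈ e)
  simp only [oddVerts, Finset.mem_symmDiff, Finset.mem_filter, Finset.mem_univ, true_and, hf]
  rw [Nat.odd_iff, Nat.odd_iff, Nat.odd_iff]
  omega

lemma oddVerts_empty {V : Type*} [Fintype V] [DecidableEq V] :
    oddVerts (∅ : Finset (Sym2 V)) = ∅ := by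
  simp [oddVerts]

lemma oddVerts_pathEdges {V : Type*} [Fintype V] [DecidableEq V]
    {G : SimpleGraph V} {u v : V} (p : G.Walk u v) (hp : p.IsPath) :
    oddVerts p.edges.toFinset = if u = v then ∅ else {u, v} := by
  induction p with
  | nil => simp [oddVerts_empty]
  | @cons u b v h q ih =>
    rw [SimpleGraph.Walk.cons_isPath_iff] at hp
    obtain ⟨hq, hu⟩ := hp
    have hub : u ≠ b := h.ne
    have huv : u ≠ v := fun e => hu (e ▸ q.end_mem_support)
    have hnotmem : s(u, b) ∉ q.edges.toFinset := by
      intro hmem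
      exact hu (SimpleGraph.Walk.fst_mem_support_of_mem_edges q (List.mem_toFinset.mp hmem))
    have hins : (SimpleGraph.Walk.cons h q).edges.toFinset
        = ({s(u, b)} : Finset (Sym2 V)) ∆ q.edges.toFinset := by
      ext e
      simp only [SimpleGraph.Walk.edges_cons, List.toFinset_cons, Finset.mem_insert,
        Finset.mem_symmDiff, Finset.mem_singleton]
      constructor
      · rintro (rfl | he)
        · exact Or.inl ⟨rfl, hnotmem⟩
        · by_cases hc : e = s(u, b)
          · exact Or.inl ⟨hc, hc ▸ hnotmem⟩
          · exact Or.inr ⟨he, hc⟩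
      · tauto
    have hsingle : oddVerts ({s(u, b)} : Finset (Sym2 V)) = {u, b} := by
      ext w
      simp only [oddVerts, Finset.mem_filter, Finset.mem_univ, true_and,
        Finset.filter_singleton, Finset.mem_insert, Finset.mem_singleton]
      by_cases hw : w ∈ s(u, b)
      · rw [if_pos hw]
        have := Sym2.mem_iff.mp hw
        simp only [Finset.card_singleton]
        simpa using this
      · rw [if_neg hw]
        rw [Sym2.mem_iff] at hw
        push_neg at hw
        simp [hw.1, hw.2]
    rw [hins, oddVerts_symmDiff, hsingle, ih hq]
    by_cases hbv : b = v
    · subst hbv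
      simp [huv]
    · simp only [if_neg hbv, if_neg huv]
      have hub2 : u ∉ ({b, v} : Finset V) := by
        simp only [Finset.mem_insert, Finset.mem_singleton]
        push_neg
        exact ⟨hub, huv⟩
      ext a
      simp only [Finset.mem_symmDiff, Finset.mem_insert, Finset.mem_singleton] at *
      constructor
      · rintro (⟨(rfl | rfl), h2⟩ | ⟨(rfl | rfl), h2⟩) <;> tauto
      · rintro (rfl | rfl)
        · exact Or.inl ⟨Or.inl rfl, fun h => hub2 h⟩
        · exact Or.inr ⟨Or.inr rfl, fun h => by tauto⟩

/-- `λ(C_0) ≤ x^{-d(u,v)} λ(C_{uv})` for distinct vertices `u, v` of a connected graph. -/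
theorem lam_empty_le {V : Type*} [Fintype V] [DecidableEq V]
    (G : SimpleGraph V) [DecidableRel G.Adj] (hG : G.Connected)
    {x : ℝ} (hx : x ∈ Set.Ioo (0 : ℝ) 1) {u v : V} (huv : u ≠ v) :
    lam G x ∅ ≤ x ^ (-(G.dist u v : ℤ)) * lam G x {u, v} := by
  obtain ⟨p, hp⟩ := hG.exists_walk_length_eq_dist u v
  have hpath : p.IsPath := p.isPath_of_length_eq_dist hp
  set d := G.dist u v with hd
  set P : Finset (Sym2 V) := p.edges.toFinset with hPdef
  have hPcard : P.card = d := by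
    rw [hPdef, List.toFinset_card_of_nodup hpath.isTrail.edges_nodup, p.length_edges, hp]
  have hPsub : P ⊆ G.edgeFinset := fun e he =>
    SimpleGraph.mem_edgeFinset.mpr (p.edges_subset_edgeSet (List.mem_toFinset.mp he))
  have hPodd : oddVerts P = {u, v} := by
    rw [hPdef, oddVerts_pathEdges p hpath, if_neg huv]
  have hx0 : (0:ℝ) < x := hx.1
  have hx1 : x ≤ 1 := hx.2.le
  rw [lam, lam, Finset.mul_sum]
  have hmem : ∀ A ∈ G.edgeFinset.powerset.filter (fun A => oddVerts A = ∅),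
      A ∆ P ∈ G.edgeFinset.powerset.filter (fun A => oddVerts A = {u, v}) := by
    intro A hA
    rw [Finset.mem_filter, Finset.mem_powerset] at *
    refine ⟨(symmDiff_le_sup).trans (Finset.union_subset hA.1 hPsub), ?_⟩
    rw [oddVerts_symmDiff, hA.2, hPodd, Finset.bot_eq_empty.symm, bot_symmDiff]
  have hmem' : ∀ B ∈ G.edgeFinset.powerset.filter (fun A => oddVerts A = {u, v}),
      B ∆ P ∈ G.edgeFinset.powerset.filter (fun A => oddVerts A = ∅) := by
    intro B hB
    rw [Finset.mem_filter, Finset.mem_powerset] at *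
    refine ⟨(symmDiff_le_sup).trans (Finset.union_subset hB.1 hPsub), ?_⟩
    rw [oddVerts_symmDiff, hB.2, hPodd, symmDiff_self, Finset.bot_eq_empty]
  calc ∑ A ∈ G.edgeFinset.powerset.filter (fun A => oddVerts A = ∅), x ^ A.card
      ≤ ∑ A ∈ G.edgeFinset.powerset.filter (fun A => oddVerts A = ∅),
        x ^ (-(d : ℤ)) * x ^ (A ∆ P).card := by
        apply Finset.sum_le_sum
        intro A _
        have hk : (A ∆ P).card ≤ A.card + d := by
          calc (A ∆ P).card ≤ (A ∪ P).card :=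
                Finset.card_le_card symmDiff_le_sup
            _ ≤ A.card + P.card := Finset.card_union_le _ _
            _ = A.card + d := by rw [hPcard]
        rw [← zpow_natCast x (A ∆ P).card, ← zpow_add₀ hx0.ne', ← zpow_natCast x A.card]
        apply zpow_le_zpow_right_of_le_one₀ hx0 hx1
        omega
    _ = ∑ B ∈ G.edgeFinset.powerset.filter (fun A => oddVerts A = {u, v}),
        x ^ (-(d : ℤ)) * x ^ B.card := by
        apply Finset.sum_nbij' (i := fun A => A ∆ P) (j := fun B => B ∆ P) hmem hmem'
        · intro A _; exact symmDiff_symmDiff_cancel_right P A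
        · intro B _; exact symmDiff_symmDiff_cancel_right P B
        · intro A _; rfl
end

section
/- The PS worm chain with acceptance probabilities given by the lazy Metropolis rule is reversible with respect to π(A) ∝ n·x^{|A|} for A ∈ C_0 and 2·x^{|A|} for A ∈ C_2, i.e., π(A)P(A,A') = π(A')P(A',A) for all A, A' ∈ C_0 ∪ C_2. -/
open Finset

/-- `C_k`: the edge sets `A ⊆ E` with exactly `k` odd-degree vertices. -/
def Ck {V : Type*} [Fintype V] [DecidableEq V]
    (G : SimpleGraph V) [DecidableRel G.Adj] (k : ℕ) : Finset (Finset (Sym2 V)) :=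
  G.edgeFinset.powerset.filter fun A => (oddVerts A).card = k

/-- `λ(S) = Σ_{A ∈ S} x^{|A|}` for a set `S` of configurations. -/
noncomputable def lamSet {V : Type*} [DecidableEq V]
    (x : ℝ) (S : Finset (Finset (Sym2 V))) : ℝ :=
  ∑ A ∈ S, x ^ A.card

/-- Probability of selecting the starting vertex `u`: uniform on `V` if `A ∈ C_0`,
uniform on `∂A` if `∂A ≠ ∅`. -/
noncomputable def selProb {V : Type*} [Fintype V] [DecidableEq V]
    (A : Finset (Sym2 V)) (u : V) : ℝ :=
  if (oddVerts A).card = 0 then 1 / (Fintype.card V : ℝ)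
  else if u ∈ oddVerts A then 1 / ((oddVerts A).card : ℝ) else 0

/-- Lazy Metropolis acceptance probability for the move `A → A △ {uv}`. -/
noncomputable def accProb {V : Type*} [Fintype V] [DecidableEq V]
    (G : SimpleGraph V) [DecidableRel G.Adj] (x : ℝ) (A : Finset (Sym2 V)) (u v : V) : ℝ :=
  let xpm : ℝ := if s(u, v) ∈ A then 1 / x else x
  if (oddVerts A).card = 2 ∧ (oddVerts (symmDiff A {s(u, v)})).card = 2 ∧ u ∈ oddVerts A then
    (1 / 2) * min 1 ((G.degree u : ℝ) / (G.degree v : ℝ) * xpm)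
  else (1 / 2) * min 1 xpm

/-- Off-diagonal transition probability of the PS (worm) chain: sum over ordered choices
of the pivot vertex `u` and its neighbour `v` realizing the single-edge flip `A → A'`. -/
noncomputable def Pmove {V : Type*} [Fintype V] [DecidableEq V]
    (G : SimpleGraph V) [DecidableRel G.Adj] (x : ℝ) (A A' : Finset (Sym2 V)) : ℝ :=
  ∑ u : V, ∑ v : V,
    if G.Adj u v ∧ A' = symmDiff A {s(u, v)} then
      selProb A u * (1 / (G.degree u : ℝ)) * accProb G x A u v
    else 0

/-- The full transition matrix of the (lazy) PS chain. -/
noncomputable def Pps {V : Type*} [Fintype V] [DecidableEq V]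
    (G : SimpleGraph V) [DecidableRel G.Adj] (x : ℝ) (A A' : Finset (Sym2 V)) : ℝ :=
  if A' = A then 1 - ∑ B ∈ G.edgeFinset.powerset, Pmove G x A B
  else Pmove G x A A'

/- ### auxiliary lemmas -/

section Aux
variable {α : Type*} [DecidableEq α]

theorem symmDiff_singleton_not_mem (A : Finset α) (e : α) (h : e ∉ A) :
    symmDiff A {e} = insert e A := by
  ext a
  rcases eq_or_ne a e with rfl|hne
  · simp [Finset.mem_symmDiff, h]
  · simp [Finset.mem_symmDiff, hne]

theorem symmDiff_singleton_mem (A : Finset α) (e : α) (h : e ∈ A) :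
    symmDiff A {e} = A.erase e := by
  ext a
  rcases eq_or_ne a e with rfl|hne
  · simp [Finset.mem_symmDiff, h]
  · simp [Finset.mem_symmDiff, hne, and_comm]

theorem odd_card_symmDiff_singleton (A : Finset α) (e : α) :
    Odd ((symmDiff A {e}).card) ↔ ¬ Odd A.card := by
  by_cases h : e ∈ A
  · rw [symmDiff_singleton_mem A e h, ← Finset.card_erase_add_one h, Nat.odd_add_one, not_not]
  · rw [symmDiff_singleton_not_mem A e h, Finset.card_insert_of_notMem h, Nat.odd_add_one]

theorem filter_symmDiff' (A B : Finset α) (p : α → Prop) [DecidablePred p] :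
    (symmDiff A B).filter p = symmDiff (A.filter p) (B.filter p) := by
  ext a; simp [Finset.mem_symmDiff, Finset.mem_filter]; tauto

end Aux

section Odd
variable {V : Type*} [Fintype V] [DecidableEq V]

theorem mem_oddVerts_symmDiff (A : Finset (Sym2 V)) (e : Sym2 V) (w : V) :
    w ∈ oddVerts (symmDiff A {e}) ↔ ((w ∈ oddVerts A) ↔ w ∉ e) := by
  simp only [oddVerts, Finset.mem_filter, Finset.mem_univ, true_and]
  rw [filter_symmDiff', Finset.filter_singleton]
  by_cases hw : w ∈ e
  · simp only [hw, if_pos, odd_card_symmDiff_singleton]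
    tauto
  · simp only [hw, if_neg, not_false_iff]
    rw [show (∅ : Finset (Sym2 V)) = (⊥ : Finset (Sym2 V)) from rfl, symmDiff_bot]
    simp [hw]

theorem oddVerts_symmDiff_pair (A : Finset (Sym2 V)) (u v : V) :
    oddVerts (symmDiff A {s(u,v)}) = symmDiff (oddVerts A) {u, v} := by
  ext w
  rw [mem_oddVerts_symmDiff]
  simp only [Finset.mem_symmDiff, Finset.mem_insert, Finset.mem_singleton, Sym2.mem_iff]
  tauto

theorem double_sum_pair {M : Type*} [AddCommMonoid M] (f : V → V → M) {u v : V} (hne : u ≠ v) :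
    (∑ a : V, ∑ b : V, if ((a = u ∧ b = v) ∨ (a = v ∧ b = u)) then f a b else 0)
      = f u v + f v u := by
  have split : ∀ a b : V, (if ((a = u ∧ b = v) ∨ (a = v ∧ b = u)) then f a b else 0)
      = (if (a=u∧b=v) then f a b else 0) + (if (a=v∧b=u) then f a b else 0) := by
    intro a b
    rcases em (a = u ∧ b = v) with ⟨rfl, rfl⟩ | h1
    · rw [if_pos (Or.inl ⟨rfl, rfl⟩), if_pos ⟨rfl, rfl⟩,
        if_neg (fun h => hne h.1), add_zero]
    · rcases em (a = v ∧ b = u) with ⟨rfl, rfl⟩ | h2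
      · rw [if_pos (Or.inr ⟨rfl, rfl⟩), if_neg h1, if_pos ⟨rfl, rfl⟩, zero_add]
      · rw [if_neg (by tauto), if_neg h1, if_neg h2, add_zero]
  simp only [split, Finset.sum_add_distrib, ite_and]
  simp [Finset.sum_ite_eq Finset.univ, Finset.sum_ite_eq' Finset.univ]

theorem Pmove_pair (G : SimpleGraph V) [DecidableRel G.Adj] (x : ℝ) {u v : V}
    (hadj : G.Adj u v) (A A' : Finset (Sym2 V)) (hA' : A' = symmDiff A {s(u,v)}) :
    Pmove G x A A' = selProb A u * (1 / (G.degree u : ℝ)) * accProb G x A u v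
      + selProb A v * (1 / (G.degree v : ℝ)) * accProb G x A v u := by
  have hne : u ≠ v := hadj.ne
  have hcond : ∀ a b : V, (G.Adj a b ∧ A' = symmDiff A {s(a,b)})
      ↔ ((a = u ∧ b = v) ∨ (a = v ∧ b = u)) := by
    intro a b
    constructor
    · rintro ⟨hab, heq⟩
      have h1 : symmDiff A {s(a,b)} = symmDiff A {s(u,v)} := heq.symm.trans hA'
      have h2 : ({s(a,b)} : Finset (Sym2 V)) = {s(u,v)} := symmDiff_right_injective A h1
      have h3 : s(a,b) = s(u,v) := Finset.singleton_injective h2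
      rw [Sym2.eq_iff] at h3
      exact h3
    · rintro (⟨rfl, rfl⟩|⟨rfl, rfl⟩)
      · exact ⟨hadj, hA'⟩
      · refine ⟨hadj.symm, ?_⟩
        rw [hA', Sym2.eq_swap]
  unfold Pmove
  simp only [hcond]
  exact double_sum_pair _ hne

end Odd

section Key
variable {V : Type*} [Fintype V] [DecidableEq V]
variable (G : SimpleGraph V) [DecidableRel G.Adj]

theorem key22 {x : ℝ} (hx : x ∈ Set.Ioo (0:ℝ) 1) {u v : V} (hadj : G.Adj u v)
    (A : Finset (Sym2 V)) (he : s(u,v) ∉ A)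
    (hu : u ∈ oddVerts A) (hv : v ∉ oddVerts A)
    (hc2 : (oddVerts A).card = 2)
    (hc2' : (oddVerts (symmDiff A {s(u,v)})).card = 2) :
    ((if (oddVerts A).card = 0 then (Fintype.card V : ℝ) else 2) * x ^ A.card)
        * Pmove G x A (symmDiff A {s(u,v)})
      = ((if (oddVerts (symmDiff A {s(u,v)})).card = 0 then (Fintype.card V : ℝ) else 2)
          * x ^ (symmDiff A {s(u,v)}).card)
        * Pmove G x (symmDiff A {s(u,v)}) A := by
  set A' := symmDiff A {s(u,v)} with hA'def
  have hxpos := hx.1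
  have hx1 := hx.2
  have hdu : (0:ℝ) < G.degree u := by
    exact_mod_cast (G.degree_pos_iff_exists_adj u).mpr ⟨v, hadj⟩
  have hdv : (0:ℝ) < G.degree v := by
    exact_mod_cast (G.degree_pos_iff_exists_adj v).mpr ⟨u, hadj.symm⟩
  have heA' : s(u,v) ∈ A' := by
    rw [hA'def, symmDiff_singleton_not_mem A _ he]; exact Finset.mem_insert_self _ _
  have hback : symmDiff A' {s(u,v)} = A := by
    rw [hA'def]; exact symmDiff_symmDiff_cancel_right {s(u,v)} A
  have hAA' : A = symmDiff A' {s(u,v)} := hback.symm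
  have hcard' : A'.card = A.card + 1 := by
    rw [hA'def, symmDiff_singleton_not_mem A _ he, Finset.card_insert_of_notMem he]
  have hodd' : oddVerts A' = symmDiff (oddVerts A) {u, v} := oddVerts_symmDiff_pair A u v
  have hu' : u ∉ oddVerts A' := by
    rw [hodd', Finset.mem_symmDiff]; simp [hu]
  have hv' : v ∈ oddVerts A' := by
    rw [hodd', Finset.mem_symmDiff]; simp [hv]
  have he' : s(v,u) ∉ A := by rw [Sym2.eq_swap]; exact he
  have heA'' : s(v,u) ∈ A' := by rw [Sym2.eq_swap]; exact heA'
  have hback' : symmDiff A' {s(v,u)} = A := by rw [Sym2.eq_swap]; exact hback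
  -- transition values
  have hsAu : selProb A u = 1/2 := by
    rw [selProb, if_neg (by omega), if_pos hu, hc2]; norm_num
  have hsAv : selProb A v = 0 := by
    rw [selProb, if_neg (by omega), if_neg hv]
  have hsA'v : selProb A' v = 1/2 := by
    rw [selProb, if_neg (by omega), if_pos hv', hc2']; norm_num
  have hsA'u : selProb A' u = 0 := by
    rw [selProb, if_neg (by omega), if_neg hu']
  have haccA : accProb G x A u v
      = (1/2) * min 1 ((G.degree u : ℝ) / (G.degree v : ℝ) * x) := by
    rw [accProb]
    simp only [if_neg he]
    rw [if_pos ⟨hc2, hc2', hu⟩]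
  have haccA' : accProb G x A' v u
      = (1/2) * min 1 ((G.degree v : ℝ) / (G.degree u : ℝ) * (1/x)) := by
    rw [accProb]
    simp only [if_pos heA'']
    rw [if_pos ⟨hc2', by rw [hback']; exact hc2, hv'⟩]
  rw [Pmove_pair G x hadj A A' rfl, Pmove_pair G x hadj A' A hAA']
  rw [hsAu, hsAv, hsA'u, hsA'v, haccA, haccA', if_neg (by omega), if_neg (by omega), hcard']
  have hmin : (x ^ A.card / (G.degree u : ℝ)) * min 1 ((G.degree u : ℝ) / (G.degree v : ℝ) * x)
      = (x ^ A.card * x / (G.degree v : ℝ))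
        * min 1 ((G.degree v : ℝ) / (G.degree u : ℝ) * (1/x)) := by
    have hX : (0:ℝ) ≤ x ^ A.card / (G.degree u : ℝ) := by positivity
    have hY : (0:ℝ) ≤ x ^ A.card * x / (G.degree v : ℝ) := by positivity
    rw [mul_min_of_nonneg _ _ hX, mul_min_of_nonneg _ _ hY, min_comm]
    congr 1
    · field_simp
    · field_simp
  ring_nf
  ring_nf at hmin
  linarith [hmin]

theorem key (hn : 2 ≤ Fintype.card V) {x : ℝ} (hx : x ∈ Set.Ioo (0:ℝ) 1) {u v : V}
    (hadj : G.Adj u v) (A : Finset (Sym2 V)) (he : s(u,v) ∉ A)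
    (h0 : (oddVerts A).card = 0 ∨ (oddVerts A).card = 2)
    (h2 : (oddVerts (symmDiff A {s(u,v)})).card = 0 ∨ (oddVerts (symmDiff A {s(u,v)})).card = 2) :
    ((if (oddVerts A).card = 0 then (Fintype.card V : ℝ) else 2) * x ^ A.card)
        * Pmove G x A (symmDiff A {s(u,v)})
      = ((if (oddVerts (symmDiff A {s(u,v)})).card = 0 then (Fintype.card V : ℝ) else 2)
          * x ^ (symmDiff A {s(u,v)}).card)
        * Pmove G x (symmDiff A {s(u,v)}) A := by
  set A' := symmDiff A {s(u,v)} with hA'def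
  have hxpos := hx.1
  have hx1 := hx.2
  have hne : u ≠ v := hadj.ne
  have hdu : (0:ℝ) < G.degree u := by
    exact_mod_cast (G.degree_pos_iff_exists_adj u).mpr ⟨v, hadj⟩
  have hdv : (0:ℝ) < G.degree v := by
    exact_mod_cast (G.degree_pos_iff_exists_adj v).mpr ⟨u, hadj.symm⟩
  have hnpos : (0:ℝ) < (Fintype.card V : ℝ) := by
    exact_mod_cast lt_of_lt_of_le two_pos hn
  have heA' : s(u,v) ∈ A' := by
    rw [hA'def, symmDiff_singleton_not_mem A _ he]; exact Finset.mem_insert_self _ _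
  have hback : symmDiff A' {s(u,v)} = A := by
    rw [hA'def]; exact symmDiff_symmDiff_cancel_right {s(u,v)} A
  have hAA' : A = symmDiff A' {s(u,v)} := hback.symm
  have hcard' : A'.card = A.card + 1 := by
    rw [hA'def, symmDiff_singleton_not_mem A _ he, Finset.card_insert_of_notMem he]
  have hodd' : oddVerts A' = symmDiff (oddVerts A) {u, v} := oddVerts_symmDiff_pair A u v
  have he' : s(v,u) ∉ A := by rw [Sym2.eq_swap]; exact he
  have heA'' : s(v,u) ∈ A' := by rw [Sym2.eq_swap]; exact heA'
  have hback' : symmDiff A' {s(v,u)} = A := by rw [Sym2.eq_swap]; exact hback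
  have hmin1 : min 1 x = x := min_eq_right hx1.le
  have hmin2 : min (1:ℝ) (1/x) = 1 := min_eq_left (by rw [le_div_iff₀ hxpos]; linarith)
  rcases h0 with hc0 | hc2
  · -- A ∈ C_0, A' ∈ C_2
    have hSempty : oddVerts A = ∅ := Finset.card_eq_zero.mp hc0
    have hS' : oddVerts A' = {u,v} := by
      rw [hodd', hSempty, show (∅ : Finset V) = ⊥ from rfl, bot_symmDiff]
    have hc2' : (oddVerts A').card = 2 := by rw [hS']; exact Finset.card_pair hne
    have hsAu : selProb A u = 1 / (Fintype.card V : ℝ) := by rw [selProb, if_pos hc0]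
    have hsAv : selProb A v = 1 / (Fintype.card V : ℝ) := by rw [selProb, if_pos hc0]
    have hsA'u : selProb A' u = 1/2 := by
      rw [selProb, if_neg (by omega), if_pos (by rw [hS']; simp), hc2']; norm_num
    have hsA'v : selProb A' v = 1/2 := by
      rw [selProb, if_neg (by omega), if_pos (by rw [hS']; simp), hc2']; norm_num
    have ha1 : accProb G x A u v = (1/2) * x := by
      rw [accProb]; simp only [if_neg he]
      rw [if_neg (by rw [hc0]; norm_num), hmin1]
    have ha2 : accProb G x A v u = (1/2) * x := by
      rw [accProb]; simp only [if_neg he']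
      rw [if_neg (by rw [hc0]; norm_num), hmin1]
    have ha3 : accProb G x A' u v = (1/2) := by
      rw [accProb]; simp only [if_pos heA']
      rw [if_neg (by rw [hback, hc0]; norm_num), hmin2, mul_one]
    have ha4 : accProb G x A' v u = (1/2) := by
      rw [accProb]; simp only [if_pos heA'']
      rw [if_neg (by rw [hback', hc0]; norm_num), hmin2, mul_one]
    rw [Pmove_pair G x hadj A A' rfl, Pmove_pair G x hadj A' A hAA']
    rw [hsAu, hsAv, hsA'u, hsA'v, ha1, ha2, ha3, ha4, if_pos hc0, if_neg (by omega), hcard']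
    field_simp
    ring
  · rcases h2 with hc0' | hc2'
    · -- A ∈ C_2, A' ∈ C_0
      have hS'empty : oddVerts A' = ∅ := Finset.card_eq_zero.mp hc0'
      have hSuv : oddVerts A = {u,v} := by
        have h := hodd'.symm.trans hS'empty
        rw [show (∅ : Finset V) = ⊥ from rfl, symmDiff_eq_bot] at h
        exact h
      have hu : u ∈ oddVerts A := by rw [hSuv]; simp
      have hv : v ∈ oddVerts A := by rw [hSuv]; simp
      have hsAu : selProb A u = 1/2 := by
        rw [selProb, if_neg (by omega), if_pos hu, hc2]; norm_num
      have hsAv : selProb A v = 1/2 := by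
        rw [selProb, if_neg (by omega), if_pos hv, hc2]; norm_num
      have hsA'u : selProb A' u = 1 / (Fintype.card V : ℝ) := by rw [selProb, if_pos hc0']
      have hsA'v : selProb A' v = 1 / (Fintype.card V : ℝ) := by rw [selProb, if_pos hc0']
      have ha1 : accProb G x A u v = (1/2) * x := by
        rw [accProb]; simp only [if_neg he]
        rw [if_neg (by rw [← hA'def, hc0']; norm_num), hmin1]
      have ha2 : accProb G x A v u = (1/2) * x := by
        rw [accProb]; simp only [if_neg he']
        rw [if_neg (by rw [show s(v,u) = s(u,v) from Sym2.eq_swap, ← hA'def, hc0']; norm_num),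
          hmin1]
      have ha3 : accProb G x A' u v = (1/2) := by
        rw [accProb]; simp only [if_pos heA']
        rw [if_neg (by rw [hc0']; norm_num), hmin2, mul_one]
      have ha4 : accProb G x A' v u = (1/2) := by
        rw [accProb]; simp only [if_pos heA'']
        rw [if_neg (by rw [hc0']; norm_num), hmin2, mul_one]
      rw [Pmove_pair G x hadj A A' rfl, Pmove_pair G x hadj A' A hAA']
      rw [hsAu, hsAv, hsA'u, hsA'v, ha1, ha2, ha3, ha4, if_neg (by omega), if_pos hc0', hcard']
      field_simp
      ring
    · -- A, A' ∈ C_2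
      by_cases hu : u ∈ oddVerts A
      · by_cases hv : v ∈ oddVerts A
        · exfalso
          have hsub : ({u,v} : Finset V) ⊆ oddVerts A := by
            intro w hw; simp only [Finset.mem_insert, Finset.mem_singleton] at hw
            rcases hw with rfl | rfl <;> assumption
          have heq : ({u,v} : Finset V) = oddVerts A :=
            Finset.eq_of_subset_of_card_le hsub (by rw [hc2, Finset.card_pair hne])
          rw [hodd', ← heq, symmDiff_self] at hc2'
          simp at hc2'
        · exact key22 G hx hadj A he hu hv hc2 hc2'
      · by_cases hv : v ∈ oddVerts A
        · have goalswap := key22 G hx hadj.symm A he' hv hu hc2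
            (by rw [show s(v,u) = s(u,v) from Sym2.eq_swap]; exact hc2')
          rw [show s(v,u) = s(u,v) from Sym2.eq_swap] at goalswap
          exact goalswap
        · exfalso
          have hdisj : Disjoint (oddVerts A) ({u,v} : Finset V) := by
            simp [Finset.disjoint_insert_right, Finset.disjoint_singleton_right, hu, hv]
          rw [hodd', hdisj.symmDiff_eq_sup] at hc2'
          rw [show (oddVerts A ⊔ {u,v}) = oddVerts A ∪ {u,v} from rfl,
            Finset.card_union_of_disjoint hdisj, hc2, Finset.card_pair hne] at hc2'
          omega
end Key

/-- The PS chain is reversible with respect to the worm measure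
`π(A) = n x^{|A|}/Z` on `C_0`, `2 x^{|A|}/Z` on `C_2`. -/
theorem Pps_reversible {V : Type*} [Fintype V] [DecidableEq V]
    (G : SimpleGraph V) [DecidableRel G.Adj] (hG : G.Connected)
    (hn : 2 ≤ Fintype.card V) {x : ℝ} (hx : x ∈ Set.Ioo (0 : ℝ) 1) :
    let Z : ℝ := (Fintype.card V : ℝ) * lamSet x (Ck G 0) + 2 * lamSet x (Ck G 2)
    let pi : Finset (Sym2 V) → ℝ := fun A =>
      (if (oddVerts A).card = 0 then (Fintype.card V : ℝ) else 2) * x ^ A.card / Z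
    ∀ A ∈ Ck G 0 ∪ Ck G 2, ∀ A' ∈ Ck G 0 ∪ Ck G 2,
      pi A * Pps G x A A' = pi A' * Pps G x A' A := by
  intro Z pi A hA A' hA'
  have h0 : (oddVerts A).card = 0 ∨ (oddVerts A).card = 2 := by
    simp only [Ck, Finset.mem_union, Finset.mem_filter] at hA; tauto
  have h0' : (oddVerts A').card = 0 ∨ (oddVerts A').card = 2 := by
    simp only [Ck, Finset.mem_union, Finset.mem_filter] at hA'; tauto
  by_cases hd : A' = A
  · subst hd; rfl
  · rw [Pps, if_neg hd, Pps, if_neg (fun h => hd h.symm)]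
    show ((if (oddVerts A).card = 0 then (Fintype.card V : ℝ) else 2) * x ^ A.card / Z)
          * Pmove G x A A'
        = ((if (oddVerts A').card = 0 then (Fintype.card V : ℝ) else 2) * x ^ A'.card / Z)
          * Pmove G x A' A
    rw [div_mul_eq_mul_div, div_mul_eq_mul_div]
    congr 1
    by_cases hmv : ∃ p : V × V, G.Adj p.1 p.2 ∧ A' = symmDiff A {s(p.1, p.2)}
    · obtain ⟨⟨u, v⟩, hadj, hAe⟩ := hmv
      by_cases hin : s(u,v) ∈ A
      · have hA'e : s(u,v) ∉ A' := by
          rw [hAe, symmDiff_singleton_mem A _ hin]; simp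
        have hAeq : A = symmDiff A' {s(u,v)} := by
          rw [hAe]; exact (symmDiff_symmDiff_cancel_right _ _).symm
        have hkey := key G hn hx hadj A' hA'e h0' (by rw [← hAeq]; exact h0)
        rw [← hAeq] at hkey
        exact hkey.symm
      · have hkey := key G hn hx hadj A hin h0 (by rw [← hAe]; exact h0')
        rw [← hAe] at hkey
        exact hkey
    · have hz1 : Pmove G x A A' = 0 := by
        rw [Pmove]; apply Finset.sum_eq_zero; intro a _; apply Finset.sum_eq_zero; intro b _
        rw [if_neg]; rintro ⟨h1, h2⟩; exact hmv ⟨(a,b), h1, h2⟩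
      have hz2 : Pmove G x A' A = 0 := by
        rw [Pmove]; apply Finset.sum_eq_zero; intro a _; apply Finset.sum_eq_zero; intro b _
        rw [if_neg]; rintro ⟨h1, h2⟩
        exact hmv ⟨(a,b), h1, by rw [h2]; exact (symmDiff_symmDiff_cancel_right _ _).symm⟩
      rw [hz1, hz2, mul_zero, mul_zero]
end

section
/- The PS worm chain is irreducible on C_0 ∪ C_2: for any two states A, A' ∈ C_0 ∪ C_2 there is a finite sequence of single-edge moves, each staying within C_0 ∪ C_2 and having positive transition probability, connecting A to A'. -/
open Finset

section Aux

variable {V : Type*} [Fintype V] [DecidableEq V]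

lemma mem_oddVerts' {A : Finset (Sym2 V)} {w : V} :
    w ∈ oddVerts A ↔ Odd ((A.filter fun e => w ∈ e).card) := by simp [oddVerts]

lemma filter_symmDiff'_s16 (X Y : Finset (Sym2 V)) (p : Sym2 V → Prop) [DecidablePred p] :
    (symmDiff X Y).filter p = symmDiff (X.filter p) (Y.filter p) := by
  ext f; simp [Finset.mem_symmDiff, Finset.mem_filter]; tauto

lemma odd_card_symmDiff_singleton_s16 (X : Finset (Sym2 V)) (e : Sym2 V) :
    Odd ((symmDiff X {e}).card) ↔ ¬ Odd X.card := by
  by_cases he : e ∈ X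
  · have h1 : symmDiff X {e} = X.erase e := by
      ext f
      simp only [Finset.mem_symmDiff, Finset.mem_singleton, Finset.mem_erase]
      constructor
      · rintro (⟨h2, h3⟩ | ⟨rfl, h3⟩)
        · exact ⟨h3, h2⟩
        · exact absurd he h3
      · rintro ⟨h2, h3⟩; exact Or.inl ⟨h3, h2⟩
    have h2 : X.card = (X.erase e).card + 1 := (Finset.card_erase_add_one he).symm
    rw [h1, h2, Nat.odd_add_one]
    tauto
  · have h1 : symmDiff X {e} = insert e X := by
      ext f
      simp only [Finset.mem_symmDiff, Finset.mem_singleton, Finset.mem_insert]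
      constructor
      · rintro (⟨h2, h3⟩ | ⟨rfl, h3⟩)
        · exact Or.inr h2
        · exact Or.inl rfl
      · rintro (rfl | h2)
        · exact Or.inr ⟨rfl, he⟩
        · exact Or.inl ⟨h2, fun h => he (h ▸ h2)⟩
    rw [h1, Finset.card_insert_of_notMem he, Nat.odd_add_one]

lemma oddVerts_flip (A : Finset (Sym2 V)) {u v : V} (huv : u ≠ v) :
    oddVerts (symmDiff A {s(u,v)}) = symmDiff (oddVerts A) {u, v} := by
  ext w
  rw [mem_oddVerts', Finset.mem_symmDiff, filter_symmDiff'_s16]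
  by_cases hw : w ∈ s(u,v)
  · have h1 : ({s(u,v)} : Finset (Sym2 V)).filter (fun e => w ∈ e) = {s(u,v)} := by
      simp [Finset.filter_singleton, hw]
    have hw2 : w ∈ ({u,v} : Finset V) := by
      rw [Sym2.mem_iff] at hw
      simp [hw]
    rw [h1, odd_card_symmDiff_singleton_s16]
    simp only [mem_oddVerts', hw2]
    tauto
  · have h1 : ({s(u,v)} : Finset (Sym2 V)).filter (fun e => w ∈ e) = ∅ := by
      simp [Finset.filter_singleton, hw]
    have hw2 : w ∉ ({u,v} : Finset V) := by
      rw [Sym2.mem_iff] at hw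
      simp only [Finset.mem_insert, Finset.mem_singleton]
      tauto
    rw [h1, show (∅ : Finset (Sym2 V)) = ⊥ from rfl, symmDiff_bot]
    simp only [mem_oddVerts', hw2]
    tauto

lemma selProb_nonneg (A : Finset (Sym2 V)) (u : V) : 0 ≤ selProb A u := by
  unfold selProb
  split_ifs <;> positivity

lemma selProb_pos {A : Finset (Sym2 V)} {u : V}
    (h : (oddVerts A).card = 0 ∨ u ∈ oddVerts A) (hV : 0 < Fintype.card V) :
    0 < selProb A u := by
  by_cases h0 : (oddVerts A).card = 0
  · simp only [selProb, if_pos h0]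
    exact one_div_pos.mpr (by exact_mod_cast hV)
  · have hu : u ∈ oddVerts A := h.resolve_left h0
    simp only [selProb, if_neg h0, if_pos hu]
    have : 0 < (oddVerts A).card := Finset.card_pos.mpr ⟨u, hu⟩
    exact one_div_pos.mpr (by exact_mod_cast this)

lemma accProb_nonneg (G : SimpleGraph V) [DecidableRel G.Adj] {x : ℝ} (hx : 0 < x)
    (A : Finset (Sym2 V)) (u v : V) : 0 ≤ accProb G x A u v := by
  simp only [accProb]
  split_ifs
  all_goals refine mul_nonneg (by norm_num) (le_min zero_le_one ?_)
  all_goals first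
    | exact one_div_nonneg.mpr hx.le
    | exact hx.le
    | exact mul_nonneg (by positivity) (one_div_nonneg.mpr hx.le)
    | exact mul_nonneg (by positivity) hx.le

lemma accProb_pos (G : SimpleGraph V) [DecidableRel G.Adj] {x : ℝ} (hx : 0 < x)
    (A : Finset (Sym2 V)) {u v : V} (hadj : G.Adj u v) : 0 < accProb G x A u v := by
  have hdu : 0 < G.degree u := (G.degree_pos_iff_exists_adj u).mpr ⟨v, hadj⟩
  have hdv : 0 < G.degree v := (G.degree_pos_iff_exists_adj v).mpr ⟨u, hadj.symm⟩
  have hdu' : (0:ℝ) < (G.degree u : ℝ) := by exact_mod_cast hdu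
  have hdv' : (0:ℝ) < (G.degree v : ℝ) := by exact_mod_cast hdv
  simp only [accProb]
  split_ifs
  all_goals refine mul_pos (by norm_num) (lt_min one_pos ?_)
  all_goals first
    | exact one_div_pos.mpr hx
    | exact hx
    | exact mul_pos (div_pos hdu' hdv') (one_div_pos.mpr hx)
    | exact mul_pos (div_pos hdu' hdv') hx

lemma Pmove_pos (G : SimpleGraph V) [DecidableRel G.Adj] {x : ℝ} (hx : 0 < x)
    {A : Finset (Sym2 V)} {u v : V} (hadj : G.Adj u v)
    (hsel : (oddVerts A).card = 0 ∨ u ∈ oddVerts A) :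
    0 < Pmove G x A (symmDiff A {s(u,v)}) := by
  have hV : 0 < Fintype.card V := Fintype.card_pos_iff.mpr ⟨u⟩
  have hdu : 0 < G.degree u := (G.degree_pos_iff_exists_adj u).mpr ⟨v, hadj⟩
  have hdu' : (0:ℝ) < (G.degree u : ℝ) := by exact_mod_cast hdu
  unfold Pmove
  have hterm : ∀ a b : V, 0 ≤ (if G.Adj a b ∧ symmDiff A {s(u,v)} = symmDiff A {s(a, b)} then
      selProb A a * (1 / (G.degree a : ℝ)) * accProb G x A a b else 0) := by
    intro a b
    split_ifs with h
    · exact mul_nonneg (mul_nonneg (selProb_nonneg A a) (by positivity)) (accProb_nonneg G hx A a b)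
    · exact le_refl 0
  refine Finset.sum_pos' (fun a _ => Finset.sum_nonneg fun b _ => hterm a b) ⟨u, Finset.mem_univ u, ?_⟩
  refine Finset.sum_pos' (fun b _ => hterm u b) ⟨v, Finset.mem_univ v, ?_⟩
  rw [if_pos ⟨hadj, rfl⟩]
  exact mul_pos (mul_pos (selProb_pos hsel hV) (one_div_pos.mpr hdu')) (accProb_pos G hx A hadj)

lemma mem_CkUnion {G : SimpleGraph V} [DecidableRel G.Adj] {A : Finset (Sym2 V)} :
    A ∈ Ck G 0 ∪ Ck G 2 ↔ A ⊆ G.edgeFinset ∧ ((oddVerts A).card = 0 ∨ (oddVerts A).card = 2) := by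
  simp only [Ck, Finset.mem_union, Finset.mem_filter, Finset.mem_powerset]
  tauto

lemma flip_pos (G : SimpleGraph V) [DecidableRel G.Adj] {x : ℝ} (hx : 0 < x)
    {B : Finset (Sym2 V)} {u v : V} (hadj : G.Adj u v)
    (hB : B ∈ Ck G 0 ∪ Ck G 2) (hB' : symmDiff B {s(u,v)} ∈ Ck G 0 ∪ Ck G 2) :
    0 < Pmove G x B (symmDiff B {s(u,v)}) := by
  rcases (mem_CkUnion.mp hB).2 with h0 | h2
  · exact Pmove_pos G hx hadj (Or.inl h0)
  · -- card ∂B = 2 : some endpoint must be odd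
    have hne : u ≠ v := hadj.ne
    have hflip : oddVerts (symmDiff B {s(u,v)}) = symmDiff (oddVerts B) {u, v} :=
      oddVerts_flip B hne
    by_cases hu : u ∈ oddVerts B
    · exact Pmove_pos G hx hadj (Or.inr hu)
    by_cases hv : v ∈ oddVerts B
    · have hswap : s(u,v) = s(v,u) := Sym2.eq_swap
      rw [hswap]
      exact Pmove_pos G hx hadj.symm (Or.inr hv)
    · exfalso
      have hdisj : Disjoint (oddVerts B) ({u, v} : Finset V) := by
        rw [Finset.disjoint_right]
        intro a ha
        rcases Finset.mem_insert.mp ha with rfl | ha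
        · exact hu
        · rw [Finset.mem_singleton] at ha; subst ha; exact hv
      have hcard : (oddVerts (symmDiff B {s(u,v)})).card = 4 := by
        rw [hflip, hdisj.symmDiff_eq_sup]
        rw [show (oddVerts B ⊔ {u, v} : Finset V) = oddVerts B ∪ {u, v} from rfl,
          Finset.card_union_of_disjoint hdisj, h2, Finset.card_pair hne]
      rcases (mem_CkUnion.mp hB').2 with h | h <;> omega

lemma mem_edgeFinset_exists {G : SimpleGraph V} [DecidableRel G.Adj] {e : Sym2 V}
    (he : e ∈ G.edgeFinset) : ∃ a b, G.Adj a b ∧ e = s(a, b) := by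
  induction e using Sym2.ind with
  | _ a b =>
    refine ⟨a, b, ?_, rfl⟩
    rwa [SimpleGraph.mem_edgeFinset, SimpleGraph.mem_edgeSet] at he

lemma reach_empty (G : SimpleGraph V) [DecidableRel G.Adj] {x : ℝ} (hx : 0 < x)
    (A : Finset (Sym2 V)) (hA : A ∈ Ck G 0 ∪ Ck G 2) :
    Relation.ReflTransGen
      (fun B B' : Finset (Sym2 V) =>
        B' ∈ Ck G 0 ∪ Ck G 2 ∧ (∃ e ∈ G.edgeFinset, B' = symmDiff B {e}) ∧ 0 < Pmove G x B B')
      A ∅ ∧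
    Relation.ReflTransGen
      (fun B B' : Finset (Sym2 V) =>
        B' ∈ Ck G 0 ∪ Ck G 2 ∧ (∃ e ∈ G.edgeFinset, B' = symmDiff B {e}) ∧ 0 < Pmove G x B B')
      ∅ A := by
  induction A using Finset.strongInductionOn with
  | _ A IH =>
    rcases eq_or_ne A ∅ with rfl | hne
    · exact ⟨Relation.ReflTransGen.refl, Relation.ReflTransGen.refl⟩
    obtain ⟨hsub, hcard⟩ := mem_CkUnion.mp hA
    -- find a suitable edge e = s(a,b) ∈ A to remove
    have key : ∃ a b : V, G.Adj a b ∧ s(a,b) ∈ A ∧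
        symmDiff A {s(a,b)} ∈ Ck G 0 ∪ Ck G 2 := by
      rcases hcard with h0 | h2
      · obtain ⟨e, he⟩ := Finset.nonempty_iff_ne_empty.mpr hne
        obtain ⟨a, b, hab, rfl⟩ := mem_edgeFinset_exists (hsub he)
        refine ⟨a, b, hab, he, ?_⟩
        rw [mem_CkUnion]
        constructor
        · intro f hf
          rcases Finset.mem_symmDiff.mp hf with ⟨h1, _⟩ | ⟨h1, _⟩
          · exact hsub h1
          · rw [Finset.mem_singleton] at h1; subst h1; exact hsub he
        · right
          rw [oddVerts_flip A hab.ne, Finset.card_eq_zero.mp h0,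
            show (∅ : Finset V) = ⊥ from rfl, bot_symmDiff]
          exact Finset.card_pair hab.ne
      · -- pick odd vertex a and incident edge
        obtain ⟨a, ha⟩ := Finset.card_pos.mp (by omega : 0 < (oddVerts A).card)
        have hodd := mem_oddVerts'.mp ha
        obtain ⟨e, hef⟩ := Finset.card_pos.mp hodd.pos
        rw [Finset.mem_filter] at hef
        obtain ⟨heA, hae⟩ := hef
        obtain ⟨b, rfl⟩ := Sym2.mem_iff_exists.mp hae
        have hab : G.Adj a b := (SimpleGraph.mem_edgeSet G).mp
          ((SimpleGraph.mem_edgeFinset).mp (hsub heA))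
        refine ⟨a, b, hab, heA, ?_⟩
        rw [mem_CkUnion]
        constructor
        · intro f hf
          rcases Finset.mem_symmDiff.mp hf with ⟨h1, _⟩ | ⟨h1, _⟩
          · exact hsub h1
          · rw [Finset.mem_singleton] at h1; subst h1; exact hsub heA
        · rw [oddVerts_flip A hab.ne]
          by_cases hb : b ∈ oddVerts A
          · left
            have hsub2 : ({a, b} : Finset V) ⊆ oddVerts A := by
              intro z hz
              rcases Finset.mem_insert.mp hz with rfl | hz
              · exact ha
              · rw [Finset.mem_singleton] at hz; subst hz; exact hb
            have : oddVerts A = ({a, b} : Finset V) :=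
              (Finset.eq_of_subset_of_card_le hsub2 (by rw [h2, Finset.card_pair hab.ne])).symm
            rw [this, symmDiff_self]
            simp
          · right
            have : symmDiff (oddVerts A) ({a, b} : Finset V) =
                insert b ((oddVerts A).erase a) := by
              ext z
              simp only [Finset.mem_symmDiff, Finset.mem_insert, Finset.mem_singleton,
                Finset.mem_erase]
              constructor
              · rintro (⟨h1, h3⟩ | ⟨(rfl | rfl), h3⟩)
                · push_neg at h3
                  exact Or.inr ⟨h3.1, h1⟩
                · exact absurd ha h3
                · exact Or.inl rfl
              · rintro (rfl | ⟨h1, h3⟩)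
                · exact Or.inr ⟨Or.inr rfl, hb⟩
                · exact Or.inl ⟨h3, by push_neg; exact ⟨h1, fun h => hb (h ▸ h3)⟩⟩
            rw [this, Finset.card_insert_of_notMem (fun h => hb (Finset.mem_of_mem_erase h)),
              Finset.card_erase_of_mem ha, h2]
    obtain ⟨a, b, hab, heA, hBmem⟩ := key
    set B := symmDiff A {s(a,b)} with hBdef
    have hBA : B = A.erase s(a,b) := by
      ext f
      simp only [hBdef, Finset.mem_symmDiff, Finset.mem_singleton, Finset.mem_erase]
      constructor
      · rintro (⟨h1, h3⟩ | ⟨rfl, h3⟩)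
        · exact ⟨h3, h1⟩
        · exact absurd heA h3
      · rintro ⟨h1, h3⟩; exact Or.inl ⟨h3, h1⟩
    have hBsub : B ⊂ A := by
      rw [hBA]
      exact Finset.erase_ssubset heA
    obtain ⟨hB0, h0B⟩ := IH B hBsub hBmem
    have heE : s(a,b) ∈ G.edgeFinset := hsub heA
    have hstepAB : 0 < Pmove G x A B := flip_pos G hx hab hA hBmem
    have hback : A = symmDiff B {s(a,b)} := by
      rw [hBdef, symmDiff_symmDiff_cancel_right]
    have hstepBA : 0 < Pmove G x B A := by
      rw [hback]
      exact flip_pos G hx hab hBmem (hback ▸ hA)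
    constructor
    · exact Relation.ReflTransGen.head ⟨hBmem, ⟨s(a,b), heE, rfl⟩, hstepAB⟩ hB0
    · exact Relation.ReflTransGen.tail h0B ⟨hA, ⟨s(a,b), heE, hback⟩, hstepBA⟩

end Aux

/-- The PS chain is irreducible on `C_0 ∪ C_2`: any two states are connected by a finite
sequence of single-edge moves, each staying in `C_0 ∪ C_2` and having positive probability. -/
theorem Pps_irreducible {V : Type*} [Fintype V] [DecidableEq V]
    (G : SimpleGraph V) [DecidableRel G.Adj] (hG : G.Connected)
    {x : ℝ} (hx : x ∈ Set.Ioo (0 : ℝ) 1)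
    (A A' : Finset (Sym2 V)) (hA : A ∈ Ck G 0 ∪ Ck G 2) (hA' : A' ∈ Ck G 0 ∪ Ck G 2) :
    Relation.ReflTransGen
      (fun B B' : Finset (Sym2 V) =>
        B' ∈ Ck G 0 ∪ Ck G 2 ∧ (∃ e ∈ G.edgeFinset, B' = symmDiff B {e}) ∧ 0 < Pmove G x B B')
      A A' := by
  exact (reach_empty G hx.1 A hA).1.trans (reach_empty G hx.1 A' hA').2
end

section
/- In the ferromagnetic zero-field Ising model on a finite connected graph, the susceptibility satisfies χ = β/π(C_0) ≤ β(2n+1), where π is the worm measure. -/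
open Finset

namespace SuscWorm

variable {V : Type*} [Fintype V] [DecidableEq V]

/-- The spin value `±1` associated to a boolean. -/
noncomputable def sgn (ε : V → Bool) (v : V) : ℝ := if ε v then 1 else -1

lemma sgn_mul_self (ε : V → Bool) (v : V) : sgn ε v * sgn ε v = 1 := by
  unfold sgn; split <;> norm_num

/-- The product of the two endpoint spins of an edge. -/
noncomputable def esgn (ε : V → Bool) : Sym2 V → ℝ :=
  Sym2.lift ⟨fun a b => sgn ε a * sgn ε b, fun a b => mul_comm _ _⟩

lemma esgn_mk (ε : V → Bool) (a b : V) : esgn ε s(a, b) = sgn ε a * sgn ε b :=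
  Sym2.lift_mk _ _ _

lemma esgn_mul_self (ε : V → Bool) (e : Sym2 V) : esgn ε e * esgn ε e = 1 := by
  induction e using Sym2.ind with
  | _ a b =>
    rw [esgn_mk]
    have := sgn_mul_self ε a; have := sgn_mul_self ε b; nlinarith

lemma prod_esgn (ε : V → Bool) (A : Finset (Sym2 V)) (hA : ∀ e ∈ A, ¬ e.IsDiag) :
    ∏ e ∈ A, esgn ε e = ∏ v, sgn ε v ^ ((A.filter fun e => v ∈ e).card) := by
  induction A using Finset.induction_on with
  | empty => simp
  | @insert e A he ih =>
    have hAsub : ∀ e ∈ A, ¬ e.IsDiag := fun f hf => hA f (mem_insert_of_mem hf)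
    rw [Finset.prod_insert he, ih hAsub]
    have hcard : ∀ v : V, ((insert e A).filter fun f => v ∈ f).card
        = (if v ∈ e then 1 else 0) + (A.filter fun f => v ∈ f).card := by
      intro v
      rw [filter_insert]
      split
      · rw [Finset.card_insert_of_notMem (fun h => he (mem_filter.1 h).1)]
        omega
      · omega
    rw [show (∏ v, sgn ε v ^ ((insert e A).filter fun f => v ∈ f).card)
        = ∏ v, sgn ε v ^ (if v ∈ e then 1 else 0) * sgn ε v ^ (A.filter fun f => v ∈ f).card
      from Finset.prod_congr rfl fun v _ => by rw [hcard v, pow_add]]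
    rw [Finset.prod_mul_distrib]
    congr 1
    have : ∀ v : V, sgn ε v ^ (if v ∈ e then 1 else 0) = if v ∈ e then sgn ε v else 1 := by
      intro v; split <;> simp
    simp_rw [this]
    rw [← Finset.prod_filter]
    induction e using Sym2.ind with
    | _ a b =>
      have hab : a ≠ b := by
        have := hA s(a, b) (mem_insert_self _ _)
        simpa [Sym2.mk_isDiag_iff] using this
      have hfil : (univ.filter fun v => v ∈ s(a, b)) = {a, b} := by
        ext v; simp [Sym2.mem_iff]
      rw [hfil, Finset.prod_pair hab, esgn_mk]

lemma sum_sgn_pow (m : V → ℕ) :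
    ∑ ε : V → Bool, ∏ v, sgn ε v ^ m v
      = if (∀ v, Even (m v)) then (2 : ℝ) ^ (Fintype.card V) else 0 := by
  have key : ∑ ε : V → Bool, ∏ v, sgn ε v ^ m v
      = ∏ v, ∑ b : Bool, (if b then (1:ℝ) else -1) ^ m v := by
    rw [Finset.prod_univ_sum (fun _ => (univ : Finset Bool))
      (fun v b => (if b then (1:ℝ) else -1) ^ m v)]
    rw [Fintype.piFinset_univ]
    rfl
  rw [key]
  have inner : ∀ v, ∑ b : Bool, (if b then (1:ℝ) else -1) ^ m v
      = if Even (m v) then 2 else 0 := by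
    intro v
    rw [Fintype.sum_bool]
    by_cases h : Even (m v)
    · simp [h, h.neg_one_pow]; norm_num
    · simp [h, (Nat.not_even_iff_odd.1 h).neg_one_pow]
  simp_rw [inner]
  by_cases h : ∀ v, Even (m v)
  · rw [if_pos h, Finset.prod_congr rfl (fun v _ => if_pos (h v)), Finset.prod_const, card_univ]
  · rw [if_neg h]
    push_neg at h
    obtain ⟨v, hv⟩ := h
    exact Finset.prod_eq_zero (mem_univ v) (if_neg hv)

lemma ht (G : SimpleGraph V) [DecidableRel G.Adj] (x : ℝ) (W : Finset V) :
    (2:ℝ) ^ (Fintype.card V) * lam G x W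
      = ∑ ε : V → Bool, (∏ v ∈ W, sgn ε v) * ∏ e ∈ G.edgeFinset, (1 + x * esgn ε e) := by
  have expand : ∀ ε : V → Bool, ∏ e ∈ G.edgeFinset, (1 + x * esgn ε e)
      = ∑ A ∈ G.edgeFinset.powerset, x ^ A.card * ∏ e ∈ A, esgn ε e := by
    intro ε
    have h1 : ∀ e ∈ G.edgeFinset, (1 + x * esgn ε e) = (x * esgn ε e) + 1 := fun e _ => by ring
    rw [Finset.prod_congr rfl h1, Finset.prod_add]
    refine Finset.sum_congr rfl fun A hA => ?_
    rw [Finset.prod_const_one, mul_one, Finset.prod_mul_distrib, Finset.prod_const]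
  simp_rw [expand, Finset.mul_sum]
  rw [Finset.sum_comm]
  have step : ∀ A ∈ G.edgeFinset.powerset,
      (∑ ε : V → Bool, (∏ v ∈ W, sgn ε v) * (x ^ A.card * ∏ e ∈ A, esgn ε e))
        = x ^ A.card * (if oddVerts A = W then (2:ℝ) ^ (Fintype.card V) else 0) := by
    intro A hA
    have hnd : ∀ e ∈ A, ¬ e.IsDiag := by
      intro e he
      have hmem := Finset.mem_powerset.1 hA he
      rw [SimpleGraph.mem_edgeFinset] at hmem
      exact G.not_isDiag_of_mem_edgeSet hmem
    have hW : ∀ ε : V → Bool, (∏ v ∈ W, sgn ε v)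
        = ∏ v, sgn ε v ^ (if v ∈ W then 1 else 0) := by
      intro ε
      rw [show (∏ v, sgn ε v ^ (if v ∈ W then 1 else 0))
          = ∏ v, (if v ∈ W then sgn ε v else 1)
        from Finset.prod_congr rfl fun v _ => by split <;> simp]
      rw [← Finset.prod_filter, Finset.filter_mem_eq_inter, Finset.univ_inter]
    have key : ∀ ε : V → Bool, (∏ v ∈ W, sgn ε v) * (x ^ A.card * ∏ e ∈ A, esgn ε e)
        = x ^ A.card *
          ∏ v, sgn ε v ^ ((if v ∈ W then 1 else 0) + (A.filter fun e => v ∈ e).card) := by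
      intro ε
      rw [prod_esgn ε A hnd, hW ε]
      simp_rw [pow_add]
      rw [Finset.prod_mul_distrib]
      ring
    simp_rw [key]
    rw [← Finset.mul_sum, sum_sgn_pow]
    congr 1
    have hiff : (∀ v, Even ((if v ∈ W then 1 else 0) + (A.filter fun e => v ∈ e).card))
        ↔ oddVerts A = W := by
      rw [Finset.ext_iff]
      apply forall_congr'
      intro v
      simp only [oddVerts, Finset.mem_filter, Finset.mem_univ, true_and]
      by_cases hv : v ∈ W
      · simp only [hv, if_true, iff_true, Nat.even_iff, Nat.odd_iff]
        omega
      · simp only [hv, if_false, iff_false, Nat.even_iff, Nat.odd_iff]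
        omega
    simp only [hiff]
  rw [Finset.sum_congr rfl step]
  simp_rw [mul_ite, mul_zero]
  rw [← Finset.sum_filter]
  unfold lam
  rw [Finset.mul_sum]
  exact Finset.sum_congr rfl fun _ _ => mul_comm _ _

lemma prod_sgn_sq (ε : V → Bool) (W : Finset V) :
    (∏ v ∈ W, sgn ε v) * (∏ v ∈ W, sgn ε v) = 1 := by
  rw [← Finset.prod_mul_distrib]
  exact Finset.prod_eq_one fun v _ => sgn_mul_self ε v

lemma lam_le (G : SimpleGraph V) [DecidableRel G.Adj] {x : ℝ}
    (hx0 : 0 ≤ x) (hx1 : x ≤ 1) (W : Finset V) :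
    lam G x W ≤ lam G x ∅ := by
  have hP : ∀ ε : V → Bool, 0 ≤ ∏ e ∈ G.edgeFinset, (1 + x * esgn ε e) := by
    intro ε
    apply Finset.prod_nonneg
    intro e _
    rcases mul_self_eq_one_iff.1 (esgn_mul_self ε e) with h | h <;> rw [h] <;> nlinarith
  have h2 : (0:ℝ) < 2 ^ Fintype.card V := by positivity
  rw [← mul_le_mul_iff_right₀ h2, ht G x W, ht G x ∅]
  apply Finset.sum_le_sum
  intro ε _
  have hc : (∏ v ∈ W, sgn ε v) ≤ 1 := by nlinarith [prod_sgn_sq ε W]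
  simp only [Finset.prod_empty, one_mul]
  calc (∏ v ∈ W, sgn ε v) * ∏ e ∈ G.edgeFinset, (1 + x * esgn ε e)
      ≤ 1 * ∏ e ∈ G.edgeFinset, (1 + x * esgn ε e) :=
        mul_le_mul_of_nonneg_right hc (hP ε)
    _ = _ := one_mul _

lemma lam_nonneg (G : SimpleGraph V) [DecidableRel G.Adj] {x : ℝ} (hx : 0 ≤ x)
    (W : Finset V) : 0 ≤ lam G x W :=
  Finset.sum_nonneg fun A _ => pow_nonneg hx _

lemma lamSet_nonneg {x : ℝ} (hx : 0 ≤ x) (S : Finset (Finset (Sym2 V))) :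
    0 ≤ lamSet x S :=
  Finset.sum_nonneg fun A _ => pow_nonneg hx _

lemma lam_empty_pos (G : SimpleGraph V) [DecidableRel G.Adj] {x : ℝ} (hx : 0 < x) :
    0 < lam G x ∅ := by
  unfold lam
  apply Finset.sum_pos
  · intro A _; positivity
  · refine ⟨∅, ?_⟩
    simp [oddVerts]

lemma lamSet_Ck_zero (G : SimpleGraph V) [DecidableRel G.Adj] (x : ℝ) :
    lamSet x (Ck G 0) = lam G x ∅ := by
  unfold lamSet Ck lam
  congr 1
  apply Finset.filter_congr
  intro A _
  simp [Finset.card_eq_zero]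

lemma count_pairs (c : ℝ) (T : Finset V) :
    (∑ u : V, ∑ v : V, (if u = v then 0 else if T = {u, v} then c else 0))
      = if T.card = 2 then 2 * c else 0 := by
  by_cases h2 : T.card = 2
  · obtain ⟨a, b, hab, rfl⟩ := Finset.card_eq_two.1 h2
    have hterm : ∀ u v : V,
        (if u = v then (0:ℝ) else if ({a, b} : Finset V) = {u, v} then c else 0)
        = (if u = a then if v = b then c else 0 else 0)
          + (if u = b then if v = a then c else 0 else 0) := by
      intro u v
      by_cases huv : u = v
      · subst huv
        rw [if_pos rfl]
        by_cases ha : u = a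
        · subst ha; simp [hab]
        · by_cases hb : u = b
          · subst hb; simp [ha, Ne.symm hab]
          · simp [ha, hb]
      · rw [if_neg huv]
        by_cases hT : ({a, b} : Finset V) = {u, v}
        · have hu : u ∈ ({a, b} : Finset V) := by rw [hT]; simp
          have hv : v ∈ ({a, b} : Finset V) := by rw [hT]; simp
          simp only [Finset.mem_insert, Finset.mem_singleton] at hu hv
          rw [if_pos hT]
          rcases hu with hu | hu <;> rcases hv with hv | hv
          · exact absurd (hu.trans hv.symm) huv
          · subst hu; subst hv; simp [hab]
          · subst hu; subst hv; simp [huv]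
          · exact absurd (hu.trans hv.symm) huv
        · rw [if_neg hT]
          by_cases ha : u = a
          · subst ha
            have hvb : v ≠ b := fun h => hT (by rw [h])
            simp [hab, hvb]
          · by_cases hb : u = b
            · subst hb
              have hva : v ≠ a := fun h => hT (by rw [h]; exact Finset.pair_comm a u)
              simp [ha, hva]
            · simp [ha, hb]
    simp_rw [hterm]
    rw [if_pos h2]
    have hsum1 : (∑ u : V, ∑ v : V, (if u = a then if v = b then c else 0 else 0)) = c := by
      rw [show (∑ u : V, ∑ v : V, (if u = a then if v = b then c else 0 else 0))
          = ∑ u : V, (if u = a then c else 0) from Finset.sum_congr rfl fun u _ => by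
            by_cases h : u = a <;> simp [h, Finset.sum_ite_eq']]
      simp [Finset.sum_ite_eq']
    have hsum2 : (∑ u : V, ∑ v : V, (if u = b then if v = a then c else 0 else 0)) = c := by
      rw [show (∑ u : V, ∑ v : V, (if u = b then if v = a then c else 0 else 0))
          = ∑ u : V, (if u = b then c else 0) from Finset.sum_congr rfl fun u _ => by
            by_cases h : u = b <;> simp [h, Finset.sum_ite_eq']]
      simp [Finset.sum_ite_eq']
    rw [Finset.sum_congr rfl fun u _ => Finset.sum_add_distrib, Finset.sum_add_distrib,
      hsum1, hsum2]
    ring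
  · rw [if_neg h2]
    apply Finset.sum_eq_zero; intro u _
    apply Finset.sum_eq_zero; intro v _
    by_cases huv : u = v
    · rw [if_pos huv]
    · rw [if_neg huv, if_neg]
      intro hT
      exact h2 (by rw [hT, Finset.card_pair huv])

lemma pair_sum (G : SimpleGraph V) [DecidableRel G.Adj] (x : ℝ) :
    (∑ u : V, ∑ v : V, (if u = v then 0 else lam G x {u, v}))
      = 2 * lamSet x (Ck G 2) := by
  have hlam : ∀ u v : V, lam G x {u, v}
      = ∑ A ∈ G.edgeFinset.powerset, (if oddVerts A = {u, v} then x ^ A.card else 0) := by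
    intro u v; rw [lam, Finset.sum_filter]
  have step1 : (∑ u : V, ∑ v : V, (if u = v then 0 else lam G x {u, v}))
      = ∑ u : V, ∑ v : V, ∑ A ∈ G.edgeFinset.powerset,
          (if u = v then 0 else if oddVerts A = {u, v} then x ^ A.card else 0) := by
    refine Finset.sum_congr rfl fun u _ => Finset.sum_congr rfl fun v _ => ?_
    by_cases h : u = v
    · simp [h]
    · rw [if_neg h, hlam u v]
      exact Finset.sum_congr rfl fun A _ => (if_neg h).symm
  rw [step1]
  rw [Finset.sum_congr rfl fun u (_ : u ∈ univ) => Finset.sum_comm, Finset.sum_comm]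
  rw [Finset.sum_congr rfl fun A (_ : A ∈ G.edgeFinset.powerset) =>
    count_pairs (x ^ A.card) (oddVerts A)]
  rw [← Finset.sum_filter]
  unfold lamSet Ck
  rw [Finset.mul_sum]

end SuscWorm

/-- The zero-field ferromagnetic Ising susceptibility satisfies
`χ = β/π(C_0) ≤ β(2n+1)`, where `π` is the worm measure and `x = tanh β`. -/
theorem susceptibility_worm {V : Type*} [Fintype V] [DecidableEq V]
    (G : SimpleGraph V) [DecidableRel G.Adj] (hG : G.Connected)
    (hn : 2 ≤ Fintype.card V) {β : ℝ} (hβ : 0 < β) :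
    let x : ℝ := Real.tanh β
    let n : ℝ := Fintype.card V
    let chi : ℝ := (β / n) *
      ∑ u : V, ∑ v : V, (if u = v then 1 else lam G x {u, v} / lam G x ∅)
    let Z : ℝ := n * lamSet x (Ck G 0) + 2 * lamSet x (Ck G 2)
    let pi0 : ℝ := n * lamSet x (Ck G 0) / Z
    chi = β / pi0 ∧ chi ≤ β * (2 * n + 1) := by
  intro x n chi Z pi0
  have hx0 : 0 < x := by
    show 0 < Real.tanh β
    rw [Real.tanh_eq_sinh_div_cosh]
    exact div_pos (Real.sinh_pos_iff.2 hβ) (Real.cosh_pos β)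
  have hx1 : x < 1 := by
    show Real.tanh β < 1
    rw [Real.tanh_eq_sinh_div_cosh, div_lt_one (Real.cosh_pos β)]
    exact Real.sinh_lt_cosh β
  have hn2 : (2:ℝ) ≤ n := by
    show (2:ℝ) ≤ (Fintype.card V : ℝ)
    exact_mod_cast hn
  have hnpos : (0:ℝ) < n := by linarith
  set L0 : ℝ := lam G x ∅ with hL0def
  set L2 : ℝ := lamSet x (Ck G 2) with hL2def
  have hL0 : 0 < L0 := SuscWorm.lam_empty_pos G hx0
  have hL2 : 0 ≤ L2 := SuscWorm.lamSet_nonneg hx0.le _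
  have h0 : lamSet x (Ck G 0) = L0 := SuscWorm.lamSet_Ck_zero G x
  -- bound on the off-diagonal sum
  have hps : (∑ u : V, ∑ v : V, (if u = v then 0 else lam G x {u, v})) = 2 * L2 :=
    SuscWorm.pair_sum G x
  have hbound : 2 * L2 ≤ n * n * L0 := by
    rw [← hps]
    calc (∑ u : V, ∑ v : V, (if u = v then 0 else lam G x {u, v}))
        ≤ ∑ _u : V, ∑ _v : V, L0 := by
          refine Finset.sum_le_sum fun u _ => Finset.sum_le_sum fun v _ => ?_
          by_cases h : u = v
          · rw [if_pos h]; exact hL0.le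
          · rw [if_neg h]; exact SuscWorm.lam_le G hx0.le hx1.le _
      _ = n * n * L0 := by
          simp [Finset.sum_const, Finset.card_univ, nsmul_eq_mul, n]
          ring
  -- the inner double sum
  have hS : (∑ u : V, ∑ v : V, (if u = v then (1:ℝ) else lam G x {u, v} / lam G x ∅))
      = n + 2 * L2 / L0 := by
    have hterm : ∀ u v : V, (if u = v then (1:ℝ) else lam G x {u, v} / lam G x ∅)
        = (if u = v then 1 else 0) + (if u = v then 0 else lam G x {u, v}) / L0 := by
      intro u v
      by_cases h : u = v <;> simp [h, hL0def]
    simp_rw [hterm, Finset.sum_add_distrib, ← Finset.sum_div]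
    rw [hps]
    congr 1
    have : ∀ u : V, (∑ v : V, (if u = v then (1:ℝ) else 0)) = 1 := by
      intro u
      rw [Finset.sum_ite_eq]
      simp
    simp_rw [this]
    simp [Finset.card_univ, n]
  have hchi : chi = (β / n) * (n + 2 * L2 / L0) := by
    show (β / n) * _ = _
    rw [hS]
  have hZ : Z = n * L0 + 2 * L2 := by
    show n * lamSet x (Ck G 0) + 2 * lamSet x (Ck G 2) = _
    rw [h0]
  have hZpos : 0 < Z := by rw [hZ]; nlinarith
  constructor
  · -- chi = β / pi0
    have hpi0 : pi0 = n * L0 / Z := by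
      show n * lamSet x (Ck G 0) / Z = _
      rw [h0]
    rw [hchi, hpi0, hZ]
    field_simp
    try ring
  · -- chi ≤ β (2n+1)
    rw [hchi]
    have h1 : 2 * L2 / L0 ≤ n * n := by
      rw [div_le_iff₀ hL0]
      nlinarith
    have h2 : (β / n) * (n + 2 * L2 / L0) ≤ (β / n) * (n + n * n) := by
      apply mul_le_mul_of_nonneg_left (by linarith) (by positivity)
    have h3 : (β / n) * (n + n * n) = β * (1 + n) := by
      field_simp
    nlinarith
end
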